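/- Under Assumption B1, let U_K, U_Q ∈ ℝ^{d×d} be orthogonal matrices whose columns satisfy x_{i,opt(i)}/‖x_{i,opt(i)}‖_2 = u^k_{π(i)} and z_i/‖z_i‖_2 = u^q_{π(i)} for all i ∈ [n] for some injective π : [n] → [d]. For β ∈ ℝ^d define W := U_K Diag(β) U_Q^⊤ and B̃_{il} := sign(⟨x_{i,opt(i)}, z_i⟩)·⟨x_{i,opt(i)} − x_{il}, z_i⟩·e_{π(i)} ∈ ℝ^d. Then for every β ∈ ℝ^d, every i ∈ [n] and every l ≠ opt(i): β^⊤ B̃_{il} = (x_{i,opt(i)} − x_{il})^⊤ W z_i. In particular, β is feasible for the rotated ℓ1-SVM (β^⊤ B̃_{il} ≥ 1 for all constraints) if and only if W is feasible for the attention SVM ((x_{i,opt(i)} − x_{il})^⊤ W z_i ≥ 1 for all constraints). -/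

import Mathlib

open Real Filter Finset

noncomputable section

namespace AttnGF

/-- Softmax of a vector in `ℝ^L`. -/
def S {L : ℕ} (u : Fin L → ℝ) (l : Fin L) : ℝ := Real.exp (u l) / ∑ j, Real.exp (u j)

/-- Euclidean norm of a vector. -/
def l2 {d : ℕ} (x : Fin d → ℝ) : ℝ := Real.sqrt (∑ j, x j ^ 2)

/-- ℓ1 norm of a vector. -/
def l1 {d : ℕ} (x : Fin d → ℝ) : ℝ := ∑ j, |x j|

variable {n L d de : ℕ}

/-- Token scores γ_{il} = y_i v^⊤ x_{il}. -/
def gam (X : Fin n → Fin L → Fin d → ℝ) (y : Fin n → ℝ) (v : Fin d → ℝ)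
    (i : Fin n) (l : Fin L) : ℝ := y i * ∑ j, v j * X i l j

/-- g_i(β) = X_i (β ⊙ z_i) for the diagonal attention model. -/
def gD (X : Fin n → Fin L → Fin d → ℝ) (z : Fin n → Fin d → ℝ) (i : Fin n)
    (β : Fin d → ℝ) (l : Fin L) : ℝ := ∑ j, X i l j * (β j * z i j)

/-- Empirical exponential loss for the diagonal attention model. -/
def lossD (X : Fin n → Fin L → Fin d → ℝ) (z : Fin n → Fin d → ℝ)
    (y : Fin n → ℝ) (v : Fin d → ℝ) (β : Fin d → ℝ) : ℝ :=
  (1 / (n : ℝ)) * ∑ i, Real.exp (-(∑ l, gam X y v i l * S (gD X z i β) l))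

/-- Constraint vectors B_{il} = z_i ⊙ (x_{i,opt(i)} − x_{il}). -/
def Bv (X : Fin n → Fin L → Fin d → ℝ) (z : Fin n → Fin d → ℝ)
    (opt : Fin n → Fin L) (i : Fin n) (l : Fin L) (j : Fin d) : ℝ :=
  z i j * (X i (opt i) j - X i l j)

/-- (Σ(u) γ)_l where Σ(u) = Diag(S(u)) − S(u) S(u)^⊤. -/
def SigMul {L : ℕ} (u γv : Fin L → ℝ) (l : Fin L) : ℝ :=
  S u l * γv l - S u l * ∑ j, S u j * γv j

/-- j-th component of the gradient (partial derivative) of f at x. -/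
def pD {d : ℕ} (f : (Fin d → ℝ) → ℝ) (x : Fin d → ℝ) (j : Fin d) : ℝ :=
  fderiv ℝ f x (Pi.single j 1)

/-- Assumption A1. -/
def A1 (X : Fin n → Fin L → Fin d → ℝ) (y : Fin n → ℝ) (v : Fin d → ℝ)
    (opt : Fin n → Fin L) (nopt : Fin n → ℝ) : Prop :=
  ∀ i : Fin n, ∀ l : Fin L, l ≠ opt i →
    gam X y v i l < gam X y v i (opt i) ∧ gam X y v i l = nopt i

/-- Feasibility for the ℓ1-SVM. -/
def Feas (X : Fin n → Fin L → Fin d → ℝ) (z : Fin n → Fin d → ℝ)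
    (opt : Fin n → Fin L) (βf : Fin d → ℝ) : Prop :=
  ∀ i : Fin n, ∀ l : Fin L, l ≠ opt i → 1 ≤ ∑ j, βf j * Bv X z opt i l j

/-- Reparametrized gradient flow on (w₊, w₋). -/
def Flow (X : Fin n → Fin L → Fin d → ℝ) (z : Fin n → Fin d → ℝ)
    (y : Fin n → ℝ) (v : Fin d → ℝ) (wp wm : ℝ → Fin d → ℝ) : Prop :=
  ∀ t : ℝ, 0 ≤ t → ∀ j : Fin d,
    HasDerivAt (fun s => wp s j)
      (-(pD (fun u => lossD X z y v (fun k => (u k ^ 2 - wm t k ^ 2) / 2)) (wp t) j)) t ∧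
    HasDerivAt (fun s => wm s j)
      (-(pD (fun u => lossD X z y v (fun k => (wp t k ^ 2 - u k ^ 2) / 2)) (wm t) j)) t

/-- β(t) = (w₊(t)^{⊙2} − w₋(t)^{⊙2})/2. -/
def bCurve (wp wm : ℝ → Fin d → ℝ) (t : ℝ) (j : Fin d) : ℝ :=
  (wp t j ^ 2 - wm t j ^ 2) / 2

/-- Assumption A2 (initial loss bound). -/
def A2 (X : Fin n → Fin L → Fin d → ℝ) (z : Fin n → Fin d → ℝ)
    (y : Fin n → ℝ) (v : Fin d → ℝ) (opt : Fin n → Fin L) (nopt : Fin n → ℝ)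
    (β0 : Fin d → ℝ) : Prop :=
  ∀ jj : Fin n, lossD X z y v β0 ≤
    (Real.exp (-(nopt jj)) +
      ∑ i ∈ Finset.univ.erase jj, Real.exp (-(gam X y v i (opt i)))) / (n : ℝ)

/-- Margin μ(β) = min_{i, l ≠ opt(i)} β^⊤ B_{il}. -/
def margin (X : Fin n → Fin L → Fin d → ℝ) (z : Fin n → Fin d → ℝ)
    (opt : Fin n → Fin L) (β : Fin d → ℝ) : ℝ :=
  sInf {m : ℝ | ∃ i : Fin n, ∃ l : Fin L, l ≠ opt i ∧ m = ∑ j, β j * Bv X z opt i l j}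

/-- φ_{il}(t). -/
def phi (X : Fin n → Fin L → Fin d → ℝ) (z : Fin n → Fin d → ℝ)
    (y : Fin n → ℝ) (v : Fin d → ℝ) (β : ℝ → Fin d → ℝ) (i : Fin n) (l : Fin L)
    (t : ℝ) : ℝ :=
  -(2 / (n : ℝ)) * ∫ τ in (0:ℝ)..t,
    Real.exp (-(∑ l', gam X y v i l' * S (gD X z i (β τ)) l')) *
      SigMul (gD X z i (β τ)) (gam X y v i) l

/-- Dual variables λ_{il}(t) = φ_{il}(t) / ln μ(β(t)). -/
def lam (X : Fin n → Fin L → Fin d → ℝ) (z : Fin n → Fin d → ℝ)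
    (y : Fin n → ℝ) (v : Fin d → ℝ) (opt : Fin n → Fin L) (β : ℝ → Fin d → ℝ)
    (i : Fin n) (l : Fin L) (t : ℝ) : ℝ :=
  (1 / Real.log (margin X z opt (β t))) * phi X z y v β i l t

/-- g_i(K,Q) = X_i K Q^⊤ z_i for the full attention model. -/
def gM (X : Fin n → Fin L → Fin d → ℝ) (z : Fin n → Fin d → ℝ) (i : Fin n)
    (K Q : Fin d → Fin de → ℝ) (l : Fin L) : ℝ :=
  ∑ a, ∑ b, ∑ c, X i l a * K a b * Q c b * z i c

/-- Empirical exponential loss for the full attention model. -/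
def lossM (X : Fin n → Fin L → Fin d → ℝ) (z : Fin n → Fin d → ℝ)
    (y : Fin n → ℝ) (v : Fin d → ℝ) (K Q : Fin d → Fin de → ℝ) : ℝ :=
  (1 / (n : ℝ)) * ∑ i, Real.exp (-(∑ l, gam X y v i l * S (gM X z i K Q) l))

/-- Partial derivative of f with respect to the (a,b) entry of a matrix. -/
def pDM {d de : ℕ} (f : (Fin d → Fin de → ℝ) → ℝ) (M : Fin d → Fin de → ℝ)
    (a : Fin d) (b : Fin de) : ℝ :=
  fderiv ℝ f M (Pi.single a (Pi.single b 1))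

/-- Gradient flow on the key and query matrices. -/
def MFlow (X : Fin n → Fin L → Fin d → ℝ) (z : Fin n → Fin d → ℝ)
    (y : Fin n → ℝ) (v : Fin d → ℝ) (K Q : ℝ → Fin d → Fin de → ℝ) : Prop :=
  ∀ t : ℝ, 0 ≤ t → ∀ (a : Fin d) (b : Fin de),
    HasDerivAt (fun s => K s a b) (-(pDM (fun M => lossM X z y v M (Q t)) (K t) a b)) t ∧
    HasDerivAt (fun s => Q s a b) (-(pDM (fun M => lossM X z y v (K t) M) (Q t) a b)) t

/-- A rectangular matrix is diagonal: zero off the main diagonal. -/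
def RectDiag {d de : ℕ} (M : Fin d → Fin de → ℝ) : Prop :=
  ∀ (a : Fin d) (b : Fin de), (a : ℕ) ≠ (b : ℕ) → M a b = 0

/-- Orthogonality: U^⊤ U = 1. -/
def Orth {d : ℕ} (U : Fin d → Fin d → ℝ) : Prop :=
  ∀ j j' : Fin d, ∑ a, U a j * U a j' = (if j = j' then (1:ℝ) else 0)

/-- Assumption B1, with the pairing of non-optimal tokens given by the involution σ. -/
def B1 (X : Fin n → Fin L → Fin d → ℝ) (z : Fin n → Fin d → ℝ)
    (opt : Fin n → Fin L) (σ : Fin n → Fin L → Fin L) : Prop :=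
  (∀ i j : Fin n, i ≠ j →
    (∑ a, X i (opt i) a * X j (opt j) a = 0) ∧ (∑ a, z i a * z j a = 0)) ∧
  (∀ i, |∑ a, X i (opt i) a * z i a| = l2 (X i (opt i)) * l2 (z i)) ∧
  (∀ i, ∀ l, l ≠ opt i → σ i l ≠ opt i ∧ σ i l ≠ l ∧ σ i (σ i l) = l ∧
    ∃ c : ℝ, -1 ≤ c ∧ c < 1 ∧
      (∑ a, X i (opt i) a * (X i l a - X i (σ i l) a)) = 0 ∧
      (∀ a, X i l a + X i (σ i l) a = 2 * c * X i (opt i) a))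

/-- Rotated constraint vectors B̃_{il}. -/
def Btil (X : Fin n → Fin L → Fin d → ℝ) (z : Fin n → Fin d → ℝ)
    (opt : Fin n → Fin L) (pim : Fin n → Fin d) (i : Fin n) (l : Fin L) (j : Fin d) : ℝ :=
  Real.sign (∑ a, X i (opt i) a * z i a) * (∑ a, (X i (opt i) a - X i l a) * z i a) *
    (if j = pim i then 1 else 0)

/-- Margin with respect to the rotated constraints. -/
def marginB (X : Fin n → Fin L → Fin d → ℝ) (z : Fin n → Fin d → ℝ)
    (opt : Fin n → Fin L) (pim : Fin n → Fin d) (β : Fin d → ℝ) : ℝ :=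
  sInf {m : ℝ | ∃ i : Fin n, ∃ l : Fin L, l ≠ opt i ∧ m = ∑ j, β j * Btil X z opt pim i l j}

/-- Margin for a combined attention weight matrix. -/
def marginM (X : Fin n → Fin L → Fin d → ℝ) (z : Fin n → Fin d → ℝ)
    (opt : Fin n → Fin L) (W : Fin d → Fin d → ℝ) : ℝ :=
  sInf {m : ℝ | ∃ i : Fin n, ∃ l : Fin L, l ≠ opt i ∧
    m = ∑ a, ∑ c, (X i (opt i) a - X i l a) * W a c * z i c}

/-- Nuclear norm ‖W‖_* = trace((W^⊤W)^{1/2}). -/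
def nuclear {d : ℕ} (W : Matrix (Fin d) (Fin d) ℝ) : ℝ :=
  ((Matrix.posSemidef_conjTranspose_mul_self W).1.eigenvectorUnitary.1 *
    Matrix.diagonal ((RCLike.ofReal : ℝ → ℝ) ∘ (fun x : ℝ => Real.sqrt x) ∘
      (Matrix.posSemidef_conjTranspose_mul_self W).1.eigenvalues) *
    (star (Matrix.posSemidef_conjTranspose_mul_self W).1.eigenvectorUnitary :
      Matrix (Fin d) (Fin d) ℝ)).trace

end AttnGF

/-!
Write x for x_{i,opt(i)}. Since z_i / ‖z_i‖ is column π(i) of the orthogonal U_Q, the matrix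
W = U_K Diag(β) U_Qᵀ sends z_i to ‖z_i‖ β_{π(i)} times column π(i) of U_K, that is, to
(‖z_i‖ / ‖x‖) β_{π(i)} x. Equality in Cauchy–Schwarz (B1 (ii)) gives
‖z_i‖ x = sign⟨x, z_i⟩ ‖x‖ z_i, so (x − x_{il})ᵀ W z_i = β_{π(i)} sign⟨x, z_i⟩ ⟨x − x_{il}, z_i⟩,
which is β ⬝ B̃_{il}.
-/

open Matrix

theorem norm_smul_eq_sign_mul_norm_smul_of_abs_real_inner_eq {E : Type*}
    [NormedAddCommGroup E] [InnerProductSpace ℝ E] {x y : E}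
    (h : |inner ℝ x y| = ‖x‖ * ‖y‖) : ‖y‖ • x = (Real.sign (inner ℝ x y) * ‖x‖) • y := by
  rcases lt_trichotomy (inner ℝ x y) 0 with hneg | hzero | hpos
  · have hneg' : inner ℝ x (-y) = ‖x‖ * ‖-y‖ := by
      rw [inner_neg_right, norm_neg, ← h, abs_of_neg hneg]
    rw [Real.sign_of_neg hneg, neg_one_mul, neg_smul, ← smul_neg, ← norm_neg y]
    exact inner_eq_norm_mul_iff_real.mp hneg'
  · rw [hzero, abs_zero, eq_comm, mul_eq_zero, norm_eq_zero, norm_eq_zero] at h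
    rcases h with rfl | rfl <;> simp
  · rw [Real.sign_of_pos hpos, one_mul]
    exact inner_eq_norm_mul_iff_real.mp (h ▸ (abs_of_pos hpos).symm)

theorem Matrix.mul_diagonal_mul_transpose_mulVec_col {m n r R : Type*} [Fintype n] [Fintype r]
    [DecidableEq r] [CommRing R] (A : Matrix m r R) (B : Matrix n r R) (β : r → R)
    (hB : Bᵀ * B = 1) (k : r) :
    (A * diagonal β * Bᵀ) *ᵥ B.col k = β k • A.col k := by
  rw [← mulVec_single_one B, mulVec_mulVec, Matrix.mul_assoc, hB, Matrix.mul_one,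
    ← mulVec_mulVec, diagonal_mulVec_single, ← smul_eq_mul, Pi.single_smul', mulVec_smul,
    mulVec_single_one]

theorem Matrix.sum_sum_mul_sum_mul_eq_dotProduct_mulVec {m n r R : Type*} [Fintype m]
    [Fintype n] [Fintype r] [DecidableEq r] [CommRing R] (A : m → r → R) (B : n → r → R)
    (β : r → R) (w : m → R) (z : n → R) :
    ∑ a, ∑ c, w a * (∑ j, A a j * β j * B c j) * z c =
      w ⬝ᵥ ((of A * diagonal β * (of B)ᵀ) *ᵥ z) := by
  simp only [dotProduct, mulVec, mul_apply (M := of A * diagonal β), mul_diagonal,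
    transpose_apply, of_apply, Finset.mul_sum, Finset.sum_mul, mul_assoc]

namespace AttnGF

variable {d : ℕ}

theorem l2_eq_norm (x : Fin d → ℝ) : l2 x = ‖(WithLp.toLp 2 x : EuclideanSpace ℝ (Fin d))‖ := by
  simp [l2, EuclideanSpace.norm_eq]

theorem l2_smul_eq_sign_mul_l2_smul_of_abs_dotProduct_eq {x z : Fin d → ℝ}
    (h : |x ⬝ᵥ z| = l2 x * l2 z) : l2 z • x = (Real.sign (x ⬝ᵥ z) * l2 x) • z := by
  have hinner : inner ℝ (WithLp.toLp 2 x : EuclideanSpace ℝ (Fin d)) (WithLp.toLp 2 z) =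
      x ⬝ᵥ z := by
    rw [EuclideanSpace.inner_toLp_toLp, star_trivial, dotProduct_comm]
  rw [l2_eq_norm, l2_eq_norm, ← hinner] at h ⊢
  simpa using congrArg WithLp.ofLp (norm_smul_eq_sign_mul_norm_smul_of_abs_real_inner_eq h)

theorem Orth.transpose_mul_self {U : Fin d → Fin d → ℝ} (hU : Orth U) :
    (of U)ᵀ * of U = 1 := by
  ext j j'
  rw [mul_apply, one_apply, ← hU]
  rfl

theorem l2_ne_zero {x : Fin d → ℝ} (hx : x ≠ 0) : l2 x ≠ 0 := by
  rw [l2_eq_norm, norm_ne_zero_iff]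
  exact fun h => hx (congrArg WithLp.ofLp h)

theorem sum_mul_Btil {n L : ℕ} (X : Fin n → Fin L → Fin d → ℝ) (z : Fin n → Fin d → ℝ)
    (opt : Fin n → Fin L) (pim : Fin n → Fin d) (β : Fin d → ℝ) (i : Fin n) (l : Fin L) :
    ∑ j, β j * Btil X z opt pim i l j =
      β (pim i) * (Real.sign (X i (opt i) ⬝ᵥ z i) * ((X i (opt i) - X i l) ⬝ᵥ z i)) := by
  simp [Btil, dotProduct]

theorem dotProduct_rotated_mulVec_eq {x w z : Fin d → ℝ} {A B : Fin d → Fin d → ℝ} {k : Fin d}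
    (β : Fin d → ℝ) (hcs : |x ⬝ᵥ z| = l2 x * l2 z) (hx : x ≠ 0) (hz : z ≠ 0) (hB : Orth B)
    (hAk : ∀ a, x a / l2 x = A a k) (hBk : ∀ c, z c / l2 z = B c k) :
    w ⬝ᵥ ((of A * diagonal β * (of B)ᵀ) *ᵥ z) =
      β k * (Real.sign (x ⬝ᵥ z) * (w ⬝ᵥ z)) := by
  have hx' := l2_ne_zero hx
  have hz' := l2_ne_zero hz
  have hzcol : z = l2 z • (of B).col k := funext fun c => by
    rw [Pi.smul_apply, col_apply, of_apply, ← hBk, smul_eq_mul, mul_div_cancel₀ _ hz']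
  have hxcol : (of A).col k = (l2 x)⁻¹ • x := funext fun a => by
    rw [Pi.smul_apply, col_apply, of_apply, ← hAk, smul_eq_mul, inv_mul_eq_div]
  have hWz : (of A * diagonal β * (of B)ᵀ) *ᵥ z = (l2 z * β k / l2 x) • x := by
    conv_lhs => rw [hzcol]
    rw [mulVec_smul,
      mul_diagonal_mul_transpose_mulVec_col _ _ _ hB.transpose_mul_self, hxcol, smul_smul,
      smul_smul, div_eq_mul_inv]
  have hparallel := congrArg (w ⬝ᵥ ·) (l2_smul_eq_sign_mul_l2_smul_of_abs_dotProduct_eq hcs)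
  simp only [dotProduct_smul, smul_eq_mul] at hparallel
  rw [hWz, dotProduct_smul, smul_eq_mul]
  field_simp
  linear_combination β k * hparallel

theorem statement19_general {n L d : ℕ}
    (X : Fin n → Fin L → Fin d → ℝ) (z : Fin n → Fin d → ℝ)
    (opt : Fin n → Fin L)
    (σ : Fin n → Fin L → Fin L) (hB1 : B1 X z opt σ)
    (hx0 : ∀ i : Fin n, X i (opt i) ≠ 0) (hz0 : ∀ i : Fin n, z i ≠ 0)
    (UK UQ : Fin d → Fin d → ℝ) (hUQ : Orth UQ)
    (pim : Fin n → Fin d)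
    (hcolK : ∀ (i : Fin n) (a : Fin d),
      X i (opt i) a / l2 (X i (opt i)) = UK a (pim i))
    (hcolQ : ∀ (i : Fin n) (a : Fin d),
      z i a / l2 (z i) = UQ a (pim i)) :
    ∀ β : Fin d → ℝ,
      (∀ i : Fin n, ∀ l : Fin L, l ≠ opt i →
        (∑ j, β j * Btil X z opt pim i l j) =
          ∑ a, ∑ c, (X i (opt i) a - X i l a) * (∑ j, UK a j * β j * UQ c j) * z i c) ∧
      ((∀ i : Fin n, ∀ l : Fin L, l ≠ opt i →
          1 ≤ ∑ j, β j * Btil X z opt pim i l j) ↔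
        (∀ i : Fin n, ∀ l : Fin L, l ≠ opt i →
          1 ≤ ∑ a, ∑ c, (X i (opt i) a - X i l a) * (∑ j, UK a j * β j * UQ c j) * z i c)) := by
  intro β
  have key : ∀ i l, ∑ j, β j * Btil X z opt pim i l j =
      ∑ a, ∑ c, (X i (opt i) a - X i l a) * (∑ j, UK a j * β j * UQ c j) * z i c := by
    intro i l
    calc _ = β (pim i) * (Real.sign (X i (opt i) ⬝ᵥ z i) * ((X i (opt i) - X i l) ⬝ᵥ z i)) :=
          sum_mul_Btil X z opt pim β i l
      _ = (X i (opt i) - X i l) ⬝ᵥ ((of UK * diagonal β * (of UQ)ᵀ) *ᵥ z i) :=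
          (dotProduct_rotated_mulVec_eq β (hB1.2.1 i) (hx0 i) (hz0 i) hUQ (hcolK i)
            (hcolQ i)).symm
      _ = _ := (sum_sum_mul_sum_mul_eq_dotProduct_mulVec UK UQ β _ (z i)).symm
  exact ⟨fun i l _ => key i l, by simp only [key]⟩

/-- equivalence between the rotated ℓ1-SVM constraints on β and the
attention-SVM constraints on W = U_K Diag(β) U_Q^⊤. -/
theorem statement19 {n L d : ℕ}
    (X : Fin n → Fin L → Fin d → ℝ) (z : Fin n → Fin d → ℝ)
    (opt : Fin n → Fin L)
    (σ : Fin n → Fin L → Fin L) (hB1 : B1 X z opt σ)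
    (hx0 : ∀ i : Fin n, X i (opt i) ≠ 0) (hz0 : ∀ i : Fin n, z i ≠ 0)
    (UK UQ : Fin d → Fin d → ℝ) (hUK : Orth UK) (hUQ : Orth UQ)
    (pim : Fin n → Fin d) (hpim : Function.Injective pim)
    (hcolK : ∀ (i : Fin n) (a : Fin d),
      X i (opt i) a / l2 (X i (opt i)) = UK a (pim i))
    (hcolQ : ∀ (i : Fin n) (a : Fin d),
      z i a / l2 (z i) = UQ a (pim i)) :
    ∀ β : Fin d → ℝ,
      (∀ i : Fin n, ∀ l : Fin L, l ≠ opt i →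
        (∑ j, β j * Btil X z opt pim i l j) =
          ∑ a, ∑ c, (X i (opt i) a - X i l a) * (∑ j, UK a j * β j * UQ c j) * z i c) ∧
      ((∀ i : Fin n, ∀ l : Fin L, l ≠ opt i →
          1 ≤ ∑ j, β j * Btil X z opt pim i l j) ↔
        (∀ i : Fin n, ∀ l : Fin L, l ≠ opt i →
          1 ≤ ∑ a, ∑ c, (X i (opt i) a - X i l a) * (∑ j, UK a j * β j * UQ c j) * z i c)) :=
  statement19_general X z opt σ hB1 hx0 hz0 UK UQ hUQ pim hcolK hcolQ

end AttnGF
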